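/- Let F : (0,∞) → ℝ be non-decreasing with F ≥ 0 and ψ as above with ψ > 0 somewhere. If a·D(a) → 0 as a → ∞, where D(a) = ∫₀^a ψ(s/a) ∫_{a+s}^{2a+2s} F(t)/t³ dt ds, then F(t) = 0 for all t > 0. -/
import Mathlib


open MeasureTheory Set Filter

/-- If `F : (0,∞) → ℝ` is non-decreasing and non-negative, `ψ` is non-negative,
continuous, compactly supported in `(0,1)` with `∫₀¹ ψ = 1` (in particular
`ψ > 0` somewhere), and `a·D(a) → 0` as `a → ∞`, then `F ≡ 0` on `(0,∞)`. -/
theorem F_vanishes_of_aD_tendsto_zero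
    (F : ℝ → ℝ) (hFmono : MonotoneOn F (Ioi 0)) (hFnonneg : ∀ t > 0, 0 ≤ F t)
    (ψ : ℝ → ℝ) (hψcont : Continuous ψ) (hψnonneg : ∀ s, 0 ≤ ψ s)
    (hψsupp : Function.support ψ ⊆ Ioo 0 1)
    (hψint : ∫ s in (0:ℝ)..1, ψ s = 1)
    (hψpos : ∃ s, 0 < ψ s)
    (D : ℝ → ℝ)
    (hD : ∀ a : ℝ, 0 < a →
      D a = ∫ s in (0:ℝ)..a, ψ (s / a) * ∫ t in (a + s)..(2 * a + 2 * s), F t / t ^ 3)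
    (hlim : Tendsto (fun a => a * D a) atTop (nhds 0)) :
    ∀ t > 0, F t = 0 := by
  intro t₀ ht₀
  by_contra hne
  have hε : 0 < F t₀ := lt_of_le_of_ne (hFnonneg t₀ ht₀) (Ne.symm hne)
  set ε := F t₀ with hεdef
  -- Main quantitative bound
  have key : ∀ a : ℝ, t₀ ≤ a → ε / 64 ≤ a * D a := by
    intro a ha
    have ha0 : 0 < a := lt_of_lt_of_le ht₀ ha
    set g : ℝ → ℝ := fun t => F t / t ^ 3 with hgdef
    -- g is integrable on [a, 4a]
    have hFint : IntegrableOn F (Icc a (4 * a)) := by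
      have hmono : MonotoneOn F (Icc a (4 * a)) :=
        hFmono.mono (fun x hx => lt_of_lt_of_le ha0 hx.1)
      exact hmono.integrableOn_isCompact isCompact_Icc
    have hgint : IntegrableOn g (Icc a (4 * a)) := by
      have hmeas : AEStronglyMeasurable (fun t : ℝ => (t ^ 3)⁻¹)
          (volume.restrict (Icc a (4 * a))) :=
        ((measurable_id.pow_const 3).inv).aestronglyMeasurable
      have hbound : ∀ᵐ t ∂(volume.restrict (Icc a (4 * a))),
          ‖(t ^ 3)⁻¹‖ ≤ (a ^ 3)⁻¹ := by
        refine (ae_restrict_iff' measurableSet_Icc).2 (Eventually.of_forall fun t ht => ?_)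
        have ht0 : (0:ℝ) < t := lt_of_lt_of_le ha0 ht.1
        have h1 : a ^ 3 ≤ t ^ 3 := pow_le_pow_left₀ ha0.le ht.1 3
        have h2 : (0:ℝ) < a ^ 3 := by positivity
        rw [Real.norm_eq_abs, abs_inv, abs_of_nonneg (by positivity : (0:ℝ) ≤ t ^ 3)]
        exact inv_anti₀ h2 h1
      have h2 : IntegrableOn (fun x => (x ^ 3)⁻¹ * F x) (Icc a (4 * a)) :=
        hFint.bdd_mul (c := (a ^ 3)⁻¹) hmeas hbound
      refine h2.congr_fun ?_ measurableSet_Icc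
      intro t _; simp [hgdef, div_eq_inv_mul]
    -- inner integral lower bound
    have hinner : ∀ s ∈ Icc (0:ℝ) a,
        ε / (64 * a ^ 2) ≤ ∫ t in (a + s)..(2 * a + 2 * s), g t := by
      intro s hs
      obtain ⟨hs0, hsa⟩ := hs
      have hsub : Icc (a + s) (2 * a + 2 * s) ⊆ Icc a (4 * a) := by
        apply Icc_subset_Icc <;> linarith
      have hle : a + s ≤ 2 * a + 2 * s := by linarith
      have hgi : IntervalIntegrable g volume (a + s) (2 * a + 2 * s) := by
        rw [intervalIntegrable_iff_integrableOn_Icc_of_le hle]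
        exact hgint.mono_set hsub
      have hci : IntervalIntegrable (fun _ : ℝ => ε / (4 * a) ^ 3) volume
          (a + s) (2 * a + 2 * s) := intervalIntegrable_const
      have hmono : ∀ t ∈ Icc (a + s) (2 * a + 2 * s),
          ε / (4 * a) ^ 3 ≤ g t := by
        intro t ht
        have ht0 : (0:ℝ) < t := by have := ht.1; linarith
        have htεle : ε ≤ F t := by
          refine hFmono (mem_Ioi.2 ht₀) (mem_Ioi.2 ht0) ?_
          have := ht.1; linarith
        have ht4a : t ^ 3 ≤ (4 * a) ^ 3 := by
          refine pow_le_pow_left₀ ht0.le ?_ 3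
          have := ht.2; linarith
        have h3 : (0:ℝ) < t ^ 3 := by positivity
        simp only [hgdef]
        gcongr
        exact hFnonneg t ht0
      have hcalc : ∫ _ in (a + s)..(2 * a + 2 * s), (ε / (4 * a) ^ 3 : ℝ) =
          (a + s) * (ε / (4 * a) ^ 3) := by
        rw [intervalIntegral.integral_const, smul_eq_mul]
        ring_nf
      have h1 : ε / (64 * a ^ 2) ≤ (a + s) * (ε / (4 * a) ^ 3) := by
        have : ε / (64 * a ^ 2) = a * (ε / (4 * a) ^ 3) := by
          field_simp; ring
        rw [this]
        have hpos : (0:ℝ) ≤ ε / (4 * a) ^ 3 := by positivity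
        nlinarith
      calc ε / (64 * a ^ 2) ≤ (a + s) * (ε / (4 * a) ^ 3) := h1
        _ = ∫ _ in (a + s)..(2 * a + 2 * s), (ε / (4 * a) ^ 3 : ℝ) := hcalc.symm
        _ ≤ ∫ t in (a + s)..(2 * a + 2 * s), g t :=
          intervalIntegral.integral_mono_on hle hci hgi hmono
    -- continuity of the inner integral as a function of s
    have hGcont : ContinuousOn (fun x => ∫ t in a..x, g t) (Icc a (4 * a)) := by
      have : uIcc a (4 * a) = Icc a (4 * a) := uIcc_of_le (by linarith)
      have h := intervalIntegral.continuousOn_primitive_interval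
        (f := g) (a := a) (b := 4 * a) (μ := volume) (by rwa [this])
      rwa [this] at h
    have hinner_eq : ∀ s ∈ Icc (0:ℝ) a,
        (∫ t in (a + s)..(2 * a + 2 * s), g t) =
          (fun x => ∫ t in a..x, g t) (2 * a + 2 * s) -
          (fun x => ∫ t in a..x, g t) (a + s) := by
      intro s hs
      obtain ⟨hs0, hsa⟩ := hs
      have h1 : IntervalIntegrable g volume a (2 * a + 2 * s) := by
        rw [intervalIntegrable_iff_integrableOn_Icc_of_le (by linarith)]
        exact hgint.mono_set (Icc_subset_Icc le_rfl (by linarith))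
      have h2 : IntervalIntegrable g volume a (a + s) := by
        rw [intervalIntegrable_iff_integrableOn_Icc_of_le (by linarith)]
        exact hgint.mono_set (Icc_subset_Icc le_rfl (by linarith))
      exact (intervalIntegral.integral_interval_sub_left h1 h2).symm
    have hinner_cont : ContinuousOn
        (fun s => ∫ t in (a + s)..(2 * a + 2 * s), g t) (Icc 0 a) := by
      refine ContinuousOn.congr ?_ hinner_eq
      have hc1 : ContinuousOn (fun s : ℝ => (fun x => ∫ t in a..x, g t) (2 * a + 2 * s))
          (Icc 0 a) := by
        refine hGcont.comp ((continuous_const.add (continuous_const.mul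
          continuous_id)).continuousOn) ?_
        intro s hs; obtain ⟨h1, h2⟩ := hs
        simp only [mem_Icc, Function.comp, id_eq]
        constructor <;> linarith
      have hc2 : ContinuousOn (fun s : ℝ => (fun x => ∫ t in a..x, g t) (a + s))
          (Icc 0 a) := by
        refine hGcont.comp ((continuous_const.add continuous_id).continuousOn) ?_
        intro s hs; obtain ⟨h1, h2⟩ := hs
        simp only [mem_Icc, Function.comp, id_eq]
        constructor <;> linarith
      exact hc1.sub hc2
    -- outer integral bound
    have houter_cont : ContinuousOn
        (fun s => ψ (s / a) * ∫ t in (a + s)..(2 * a + 2 * s), g t) (Icc 0 a) :=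
      ((hψcont.comp (continuous_id.div_const a)).continuousOn).mul hinner_cont
    have houter_int : IntervalIntegrable
        (fun s => ψ (s / a) * ∫ t in (a + s)..(2 * a + 2 * s), g t) volume 0 a := by
      apply ContinuousOn.intervalIntegrable
      rwa [uIcc_of_le ha0.le]
    have hrhs_int : IntervalIntegrable
        (fun s => ψ (s / a) * (ε / (64 * a ^ 2))) volume 0 a :=
      (Continuous.intervalIntegrable (by continuity) 0 a)
    have hmono_outer : ∀ s ∈ Icc (0:ℝ) a,
        ψ (s / a) * (ε / (64 * a ^ 2)) ≤
          ψ (s / a) * ∫ t in (a + s)..(2 * a + 2 * s), g t := by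
      intro s hs
      exact mul_le_mul_of_nonneg_left (hinner s hs) (hψnonneg _)
    have hDa : D a = ∫ s in (0:ℝ)..a, ψ (s / a) * ∫ t in (a + s)..(2 * a + 2 * s), g t :=
      hD a ha0
    have hcomp : (∫ s in (0:ℝ)..a, ψ (s / a) * (ε / (64 * a ^ 2))) ≤ D a := by
      rw [hDa]
      exact intervalIntegral.integral_mono_on ha0.le hrhs_int houter_int hmono_outer
    have hval : (∫ s in (0:ℝ)..a, ψ (s / a) * (ε / (64 * a ^ 2))) =
        a * (ε / (64 * a ^ 2)) := by
      rw [intervalIntegral.integral_mul_const,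
        intervalIntegral.integral_comp_div (f := ψ) ha0.ne']
      rw [zero_div, div_self ha0.ne', smul_eq_mul, hψint]
      ring
    have hDbound : a * (ε / (64 * a ^ 2)) ≤ D a := hval ▸ hcomp
    have : a * (a * (ε / (64 * a ^ 2))) ≤ a * D a :=
      mul_le_mul_of_nonneg_left hDbound ha0.le
    have heq : a * (a * (ε / (64 * a ^ 2))) = ε / 64 := by
      field_simp
    linarith [heq ▸ this]
  -- derive the contradiction from the limit
  have hev : ∀ᶠ a in atTop, a * D a < ε / 64 :=
    hlim.eventually (Filter.Tendsto.eventually_lt_const (by positivity)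
      (tendsto_id (x := nhds (0:ℝ)))) |>.mono (fun a h => h)
  have hev2 : ∀ᶠ a in atTop, t₀ ≤ a := eventually_ge_atTop t₀
  obtain ⟨a, h1, h2⟩ := (hev.and hev2).exists
  exact absurd (key a h2) (not_le.2 h1)
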